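/- arXiv:math/0306045 — 2 statements merged into one kernel-verified Lean document; each statement's English description precedes it below -/
import Mathlib

section
/- In the sequential active-vertex construction of a multitype Galton-Watson tree restricted to recurrent types (start with one active vertex of type a at size 0; at each step pick an active vertex uniformly, provide it offspring by the restricted kernel 𝒬_r given its type, add G(v)+1 to the size, deactivate it and activate its offspring), let p_{a,b}(n) denote the probability that when the size equals n there is exactly one active vertex, of type b. Then for all a₁, a₂, a₃ ∈ 𝒳_r and positive integers n₁, n₂, one has p_{a₁,a₂}(n₁)·p_{a₂,a₃}(n₂) ≤ p_{a₁,a₃}(n₁ + n₂). -/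
open scoped ENNReal NNReal BigOperators
open Filter

/-- Finite rooted planar trees with vertex types in `𝒳`. -/
inductive PTree (𝒳 : Type*) where
  | node : 𝒳 → List (PTree 𝒳) → PTree 𝒳

namespace PTree

variable {𝒳 : Type*}

/-- The type of the root. -/
def root : PTree 𝒳 → 𝒳
  | node a _ => a

/-- The list of subtrees rooted at the children of the root (left to right). -/
def children : PTree 𝒳 → List (PTree 𝒳)
  | node _ ts => ts

/-- The types of the children of the root, from left to right. -/
def childLabels (t : PTree 𝒳) : List 𝒳 := t.children.map root

/-- The list of all subtrees `X^v`, `v` a vertex of the tree. -/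
def subtrees : PTree 𝒳 → List (PTree 𝒳)
  | node a ts => node a ts :: (ts.attach.map (fun s => subtrees s.1)).flatten
decreasing_by
  have := List.sizeOf_lt_of_mem s.2
  simp only [PTree.node.sizeOf_spec]
  omega

/-- Number of vertices. -/
def size (t : PTree 𝒳) : ℕ := t.subtrees.length

/-- The vertices at depth exactly `k`, as subtrees, from left to right. -/
def atDepth : ℕ → PTree 𝒳 → List (PTree 𝒳)
  | 0, t => [t]
  | (k+1), node _ ts => (ts.attach.map (fun s => atDepth k s.1)).flatten

/-- Truncation of a tree at height `k` (keeping the generations `0,…,k`). -/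
def trunc : ℕ → PTree 𝒳 → PTree 𝒳
  | 0, node a _ => node a []
  | (k+1), node a ts => node a (ts.attach.map (fun s => trunc k s.1))

/-- The height of a tree (largest `k` such that generation `k` is nonempty). -/
def height : PTree 𝒳 → ℕ
  | node _ [] => 0
  | node _ (t :: ts) => ((t :: ts).attach.map (fun s => height s.1)).foldr max 0 + 1
decreasing_by
  have := List.sizeOf_lt_of_mem s.2
  simp only [PTree.node.sizeOf_spec] at *
  omega

/-- The largest offspring number in the tree. -/
def maxDeg : PTree 𝒳 → ℕ
  | node _ ts => max ts.length (((ts.attach.map (fun s => maxDeg s.1)).foldr max 0))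
decreasing_by
  have := List.sizeOf_lt_of_mem s.2
  simp only [PTree.node.sizeOf_spec] at *
  omega

end PTree
noncomputable instance {𝒳 : Type*} : DecidableEq (PTree 𝒳) := Classical.decEq _

/-- Extended-real logarithm of an extended nonnegative real. -/
noncomputable def elog (x : ℝ≥0∞) : EReal :=
  if x = 0 then ⊥ else if x = ∞ then ⊤ else ((Real.log x.toReal : ℝ) : EReal)

open Classical in
/-- Relative entropy `H(ν ‖ ρ)` of two (probability) vectors on a countable set,
with value `∞` if `ν` is not absolutely continuous with respect to `ρ`.  (For
probability vectors each summand below is nonnegative and the sum equals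
`∑ ν a log (ν a / ρ a)`.) -/
noncomputable def relEnt {α : Type*} (ν ρ : α → ℝ) : ℝ≥0∞ :=
  if ∀ a, ρ a = 0 → ν a = 0 then
    ∑' a, ENNReal.ofReal (ν a * Real.log (ν a / ρ a) + ρ a - ν a)
  else ∞

/-- The Cramér rate function `I_p(x) = sup_λ {λx - log ∑ p(n) e^{λn}}`. -/
noncomputable def cramerRate (p : ℕ → ℝ) (x : ℝ) : EReal :=
  ⨆ lam : ℝ, ((lam * x - Real.log (∑' n : ℕ, p n * Real.exp (lam * n)) : ℝ) : EReal)

/-- Total mass `P{|T| = n}` assigned by the weight `w` to trees with `n` vertices. -/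
noncomputable def treeMass {𝒳 : Type*} (w : PTree 𝒳 → ℝ) (n : ℕ) : ℝ≥0∞ :=
  ∑' t : PTree 𝒳, if t.size = n then ENNReal.ofReal (w t) else 0

open Classical in
/-- Conditional probability of the event `E` given `{|T| = n}`, for the (sub)probability
weight `w` on finite planar trees.  -/
noncomputable def condP {𝒳 : Type*} (w : PTree 𝒳 → ℝ) (n : ℕ) (E : Set (PTree 𝒳)) : ℝ≥0∞ :=
  (∑' t : PTree 𝒳, if t.size = n ∧ t ∈ E then ENNReal.ofReal (w t) else 0) / treeMass w n

/-- The set of sizes having positive probability. -/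
noncomputable def sizeSupport {𝒳 : Type*} (w : PTree 𝒳 → ℝ) : Set ℕ := {n | 0 < treeMass w n}
section Statement7

variable {R : Type*} [Fintype R] [DecidableEq R]

open Classical in
/-- One step of the sequential active-vertex construction: choose an active vertex
uniformly, provide it offspring (recurrent offspring list together with the number of
omitted transient vertices) according to the kernel `Qr`, add `G(v) + 1` to the size,
deactivate it and activate its offspring. -/
noncomputable def activeStep (Qr : R → List R × ℕ → ℝ≥0∞) :
    Multiset R × ℕ → Multiset R × ℕ → ℝ≥0∞ := fun s s' =>
  ∑ v ∈ s.1.toFinset, ((s.1.count v : ℝ≥0∞) / (Multiset.card s.1 : ℝ≥0∞)) *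
    ∑' cg : List R × ℕ,
      if s'.1 = s.1.erase v + (cg.1 : Multiset R) ∧ s'.2 = s.2 + cg.2 + 1
        then Qr v cg else 0

open Classical in
/-- The distribution of the active-vertex chain after `t` steps, started from a single
active vertex of type `a` at size `0`. -/
noncomputable def activeDist (Qr : R → List R × ℕ → ℝ≥0∞) (a : R) :
    ℕ → Multiset R × ℕ → ℝ≥0∞
  | 0 => fun s => if s = ({a}, 0) then 1 else 0
  | (t+1) => fun s' => ∑' s : Multiset R × ℕ, activeDist Qr a t s * activeStep Qr s s'

/-- `p_{a,b}(n)`: the probability that when the size equals `n` there is exactly one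
active vertex, of type `b` (the state `({b}, n)` is visited at most once, since the
size strictly increases at every step). -/
noncomputable def pActive (Qr : R → List R × ℕ → ℝ≥0∞) (a b : R) (n : ℕ) : ℝ≥0∞ :=
  ∑' t : ℕ, activeDist Qr a t ({b}, n)

/-!
Put `x = ({a₁}, 0)`, `y = ({a₂}, n₁)`, `z = ({a₃}, n₁ + n₂)`. Since the chain is invariant under
translation of the size, `p_{a,b}(n)` is the Green function `G((a, k), (b, k + n))` for every `k`,
and the claim reads `G(x, y) G(y, z) ≤ G(x, z)`. The size strictly increases at each step, so `y`
is visited at most once: the first-entrance decomposition at `y` then shows that the paths of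
length `t` through `y` carry mass `∑_{r + s = t} Kʳ(x, y) Kˢ(y, z) ≤ Kᵗ(x, z)`, and summing over
`t` (a Cauchy product) gives the claim.
-/

noncomputable section KernelPowers

open Finset

theorem ENNReal.tsum_mul_tsum_eq_tsum_sum_antidiagonal (f g : ℕ → ℝ≥0∞) :
    (∑' n, f n) * ∑' n, g n = ∑' n, ∑ p ∈ antidiagonal n, f p.1 * g p.2 := by
  simp_rw [← ENNReal.tsum_mul_right, ← ENNReal.tsum_mul_left,
    ← ENNReal.tsum_prod (f := fun a b => f a * g b),
    ← Finset.HasAntidiagonal.sigmaAntidiagonalEquivProd.tsum_eq, ENNReal.tsum_sigma',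
    ← Finset.tsum_subtype]
  rfl

variable {S : Type*} [DecidableEq S] (K : S → S → ℝ≥0∞)

def stepPow : ℕ → S → S → ℝ≥0∞
  | 0 => fun x z => if z = x then 1 else 0
  | t + 1 => fun x z => ∑' m, stepPow t x m * K m z

/-- `tabooPow K y t x z`: the mass of the `t`-step paths from `x` to `z` that do not visit `y`
at the times `0, …, t - 1`. -/
def tabooPow (y : S) : ℕ → S → S → ℝ≥0∞
  | 0 => fun x z => if z = x then 1 else 0
  | t + 1 => fun x z => ∑' m, (if m = y then 0 else tabooPow y t x m) * K m z

def green (x z : S) : ℝ≥0∞ := ∑' t, stepPow K t x z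

-- first-entrance decomposition at `y`
theorem stepPow_eq_tabooPow_add_sum (y x : S) (t : ℕ) (z : S) :
    stepPow K t x z = (if z = y then 0 else tabooPow K y t x z)
      + ∑ p ∈ antidiagonal t, tabooPow K y p.1 x y * stepPow K p.2 y z := by
  induction t generalizing z with
  | zero =>
    by_cases hzy : z = y <;> by_cases hzx : z = x <;> simp_all [stepPow, tabooPow]
  | succ t ih =>
    have hsplit : stepPow K (t + 1) x z = tabooPow K y (t + 1) x z
        + ∑ p ∈ antidiagonal t, tabooPow K y p.1 x y * stepPow K (p.2 + 1) y z := by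
      simp only [stepPow, tabooPow, ih, add_mul, Finset.sum_mul, mul_assoc]
      rw [ENNReal.tsum_add, Summable.tsum_finsetSum fun _ _ => ENNReal.summable]
      simp only [ENNReal.tsum_mul_left]
    rw [hsplit, Finset.Nat.sum_antidiagonal_succ']
    by_cases hzy : z = y
    · subst hzy; simp [stepPow]
    · simp [stepPow, hzy]

variable {K} {y : S}

theorem tabooPow_eq_stepPow (hy : ∀ r, 0 < r → stepPow K r y y = 0) (t : ℕ) (x : S) :
    tabooPow K y t x y = stepPow K t x y := by
  rw [stepPow_eq_tabooPow_add_sum K y x t y, if_pos rfl, zero_add,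
    sum_eq_single_of_mem (t, 0) (HasAntidiagonal.mem_antidiagonal.2 (add_zero t))]
  · simp [stepPow]
  · rintro ⟨r, s⟩ hrs hne
    have hs : 0 < s := by
      rw [HasAntidiagonal.mem_antidiagonal] at hrs
      grind
    rw [hy s hs, mul_zero]

theorem sum_antidiagonal_stepPow_mul_le (hy : ∀ r, 0 < r → stepPow K r y y = 0) (t : ℕ)
    (x z : S) :
    ∑ p ∈ antidiagonal t, stepPow K p.1 x y * stepPow K p.2 y z ≤ stepPow K t x z := by
  simp only [stepPow_eq_tabooPow_add_sum K y x t z, ← tabooPow_eq_stepPow hy]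
  exact le_add_self

theorem green_mul_green_le (hy : ∀ r, 0 < r → stepPow K r y y = 0) (x z : S) :
    green K x y * green K y z ≤ green K x z := by
  rw [green, green, ENNReal.tsum_mul_tsum_eq_tsum_sum_antidiagonal]
  exact ENNReal.tsum_le_tsum fun t => sum_antidiagonal_stepPow_mul_le hy t x z

end KernelPowers

section SizeIncreasing

def SizeIncreasing {S : Type*} (K : S × ℕ → S × ℕ → ℝ≥0∞) : Prop :=
  ∀ s s', K s s' ≠ 0 → s.2 < s'.2

def SizeShiftInvariant {S : Type*} (K : S × ℕ → S × ℕ → ℝ≥0∞) : Prop :=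
  ∀ m m' k k' d, K (m, k + d) (m', k' + d) = K (m, k) (m', k')

variable {S : Type*} [DecidableEq S] {K : S × ℕ → S × ℕ → ℝ≥0∞}

theorem stepPow_ne_zero_snd_add_le (hK : SizeIncreasing K) {t : ℕ} {s s' : S × ℕ}
    (h : stepPow K t s s' ≠ 0) : s.2 + t ≤ s'.2 := by
  induction t generalizing s' with
  | zero =>
    obtain rfl : s' = s := by by_contra hne; simp [stepPow, hne] at h
    simp
  | succ t ih =>
    obtain ⟨m, hm⟩ := not_forall.1 (mt ENNReal.tsum_eq_zero.2 h)
    have := ih (left_ne_zero_of_mul hm)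
    have := hK _ _ (right_ne_zero_of_mul hm)
    omega

theorem stepPow_self_eq_zero (hK : SizeIncreasing K) {t : ℕ} (ht : 0 < t) (s : S × ℕ) :
    stepPow K t s s = 0 := by
  by_contra h
  have := stepPow_ne_zero_snd_add_le hK h
  omega

theorem stepPow_shift (hK : SizeIncreasing K) (hshift : SizeShiftInvariant K) (t : ℕ)
    (m m' : S) (k k' d : ℕ) :
    stepPow K t (m, k + d) (m', k' + d) = stepPow K t (m, k) (m', k') := by
  induction t generalizing m' k' with
  | zero => simp [stepPow]
  | succ t ih =>
    have hinj : Function.Injective fun p : S × ℕ => (p.1, p.2 + d) := by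
      rintro ⟨_, _⟩ ⟨_, _⟩ h
      simpa using h
    have hsupp : Function.support (fun s => stepPow K t (m, k + d) s * K s (m', k' + d)) ⊆
        Set.range fun p : S × ℕ => (p.1, p.2 + d) := by
      rintro ⟨n, j⟩ hs
      have := stepPow_ne_zero_snd_add_le hK (left_ne_zero_of_mul hs)
      exact ⟨(n, j - d), by simp only at this ⊢; congr; omega⟩
    simp only [stepPow]
    rw [← hinj.tsum_eq hsupp]
    exact tsum_congr fun p => by rw [ih, hshift]

theorem green_shift (hK : SizeIncreasing K) (hshift : SizeShiftInvariant K) (m m' : S)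
    (k k' d : ℕ) : green K (m, k + d) (m', k' + d) = green K (m, k) (m', k') :=
  tsum_congr fun t => stepPow_shift hK hshift t m m' k k' d

end SizeIncreasing

section ActiveChain

variable {X : Type*} [DecidableEq X] (Qr : X → List X × ℕ → ℝ≥0∞)

theorem sizeIncreasing_activeStep : SizeIncreasing (activeStep Qr) := by
  intro s s' h
  obtain ⟨v, -, hv⟩ := Finset.exists_ne_zero_of_sum_ne_zero h
  obtain ⟨cg, hcg⟩ := not_forall.1 (mt ENNReal.tsum_eq_zero.2 (right_ne_zero_of_mul hv))
  split_ifs at hcg with hc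
  · omega
  · exact absurd rfl hcg

theorem sizeShiftInvariant_activeStep : SizeShiftInvariant (activeStep Qr) := by
  intro m m' k k' d
  unfold activeStep
  congr! 6 with v _ cg
  simp only
  omega

theorem activeDist_eq_stepPow (a : X) (t : ℕ) :
    activeDist Qr a t = stepPow (activeStep Qr) t ({a}, 0) := by
  induction t with
  | zero => funext s; simp [activeDist, stepPow]
  | succ t ih => funext s; simp [activeDist, stepPow, ih]

theorem pActive_eq_green (a b : X) (n k : ℕ) :
    pActive Qr a b n = green (activeStep Qr) ({a}, k) ({b}, k + n) := by
  have hshift := green_shift (sizeIncreasing_activeStep Qr) (sizeShiftInvariant_activeStep Qr)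
    {a} {b} 0 n k
  rw [zero_add, add_comm n k] at hshift
  rw [hshift]
  exact tsum_congr fun t => by rw [activeDist_eq_stepPow]

end ActiveChain

theorem active_vertex_supermultiplicativity_general
    (Qr : R → List R × ℕ → ℝ≥0∞) :
    ∀ (a₁ a₂ a₃ : R) (n₁ n₂ : ℕ), 0 < n₁ → 0 < n₂ →
      pActive Qr a₁ a₂ n₁ * pActive Qr a₂ a₃ n₂ ≤ pActive Qr a₁ a₃ (n₁ + n₂) := by
  intro a₁ a₂ a₃ n₁ n₂ _ _
  rw [pActive_eq_green Qr a₁ a₂ n₁ 0, pActive_eq_green Qr a₂ a₃ n₂ n₁,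
    pActive_eq_green Qr a₁ a₃ (n₁ + n₂) 0, zero_add, zero_add]
  exact green_mul_green_le
    (fun _ hr => stepPow_self_eq_zero (sizeIncreasing_activeStep Qr) hr _) _ _

theorem active_vertex_supermultiplicativity
    (Qr : R → List R × ℕ → ℝ≥0∞) (hprob : ∀ v, ∑' cg : List R × ℕ, Qr v cg = 1)
    (N₁ : ℕ) (hbdd : ∀ (v : R) (cg : List R × ℕ), N₁ < cg.2 → Qr v cg = 0) :
    ∀ (a₁ a₂ a₃ : R) (n₁ n₂ : ℕ), 0 < n₁ → 0 < n₂ →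
      pActive Qr a₁ a₂ n₁ * pActive Qr a₂ a₃ n₂ ≤ pActive Qr a₁ a₃ (n₁ + n₂) :=
  active_vertex_supermultiplicativity_general Qr

end Statement7
end

section
/- The function J on ℳ(𝒳 × 𝒳*), defined by J(ν) = H(ν ∥ ν₁ ⊗ 𝒬) if ν is shift-invariant and J(ν) = ∞ otherwise, is convex and lower semicontinuous; moreover J(ν) ≤ Ĵ(ν) for every ν ∈ ℳ(𝒳 × 𝒳*), where Ĵ(ν) = sup over bounded g : 𝒳 × 𝒳* → ℝ of ∫ [g(b,c) − ∑_{j=1}^{n} U_g(a_j)] ν(db, dc), with c = (n, a₁,…,a_n) and U_g(a) = log ∑_c 𝒬{c|a} e^{g(a,c)}. -/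
open scoped ENNReal NNReal BigOperators
open Filter

section Multitype

variable {𝒳 : Type*} [Fintype 𝒳] [DecidableEq 𝒳]

/-- The weight of a typed tree under the multitype Galton-Watson law with initial
distribution `μ0` and offspring kernel `𝒬` (an offspring `c ∈ 𝒳*` is recorded as the
list of types of the children from left to right):
`μ0(root) ∏_v 𝒬{C(v) | type v}`. -/
noncomputable def mgwWeight (μ0 : 𝒳 → ℝ) (𝒬 : 𝒳 → List 𝒳 → ℝ) (t : PTree 𝒳) : ℝ :=
  μ0 t.root * (t.subtrees.map (fun s => 𝒬 s.root s.childLabels)).prod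

/-- The multiplicity `m(a,c)` of the symbol `a` in `c ∈ 𝒳*`. -/
def mult (a : 𝒳) (c : List 𝒳) : ℕ := c.count a

/-- The empirical offspring measure `M_X` of a typed tree. -/
noncomputable def empOff (t : PTree 𝒳) : 𝒳 × List 𝒳 → ℝ := fun x =>
  ((t.subtrees.filter (fun s => s.root = x.1 ∧ s.childLabels = x.2)).length : ℝ) / t.size

/-- The `𝒳`-marginal `ν₁` of a measure on `𝒳 × 𝒳*`. -/
noncomputable def marg1 (ν : 𝒳 × List 𝒳 → ℝ) (a : 𝒳) : ℝ := ∑' c : List 𝒳, ν (a, c)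

/-- Shift-invariance: `ν₁(a) = ∑_{(b,c)} m(a,c) ν(b,c)` for all `a`. -/
def ShiftInv (ν : 𝒳 × List 𝒳 → ℝ) : Prop :=
  ∀ a : 𝒳, marg1 ν a = ∑' x : 𝒳 × List 𝒳, (mult a x.2 : ℝ) * ν x

/-- Membership in `ℳ(𝒳 × 𝒳*)`: a probability measure with finite mean offspring
number. -/
structure IsOffMeasure (ν : 𝒳 × List 𝒳 → ℝ) : Prop where
  nonneg : ∀ x, 0 ≤ ν x
  hasSum : HasSum ν 1
  moment : Summable (fun x : 𝒳 × List 𝒳 => (x.2.length : ℝ) * ν x)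

/-- The space `ℳ(𝒳 × 𝒳*)`. -/
def MSpace (𝒳 : Type*) [Fintype 𝒳] [DecidableEq 𝒳] :=
  {ν : 𝒳 × List 𝒳 → ℝ // IsOffMeasure ν}

/-- The test functions defining the topology of `ℳ(𝒳 × 𝒳*)`: all bounded functions
together with the functions `(b,c) ↦ m(a,c) 𝟙_{b₀}(b)`, `a, b₀ ∈ 𝒳`. -/
def offTests (𝒳 : Type*) [Fintype 𝒳] [DecidableEq 𝒳] : Set ((𝒳 × List 𝒳) → ℝ) :=
  {f | ∃ M : ℝ, ∀ x, |f x| ≤ M} ∪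
    {f | ∃ a b₀ : 𝒳, f = fun x => (mult a x.2 : ℝ) * (if x.1 = b₀ then 1 else 0)}

/-- The topology of `ℳ(𝒳 × 𝒳*)`: the smallest topology making `ν ↦ ∫ f dν`
continuous for every test function `f`. -/
noncomputable instance : TopologicalSpace (MSpace 𝒳) :=
  TopologicalSpace.induced
    (fun ν : MSpace 𝒳 => fun f : offTests 𝒳 => ∑' x, ν.1 x * f.1 x) Pi.topologicalSpace

open Classical in
/-- The rate function `J(ν) = H(ν ‖ ν₁ ⊗ 𝒬)` for shift-invariant `ν`, `∞` otherwise. -/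
noncomputable def offRate (𝒬 : 𝒳 → List 𝒳 → ℝ) (ν : 𝒳 × List 𝒳 → ℝ) : ℝ≥0∞ :=
  if ShiftInv ν then relEnt ν (fun x => marg1 ν x.1 * 𝒬 x.1 x.2) else ∞

/-- The expected offspring matrix `A(a,b) = ∑_c 𝒬{c | b} m(a,c)` (with values in
`[0,∞]`). -/
noncomputable def meanMat (𝒬 : 𝒳 → List 𝒳 → ℝ) : Matrix 𝒳 𝒳 ℝ≥0∞ :=
  Matrix.of fun a b => ∑' c : List 𝒳, ENNReal.ofReal (𝒬 b c) * (mult a c : ℝ≥0∞)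

/-- `A* = ∑_{k ≥ 1} A^k`. -/
noncomputable def matStar (A : Matrix 𝒳 𝒳 ℝ≥0∞) : Matrix 𝒳 𝒳 ℝ≥0∞ :=
  Matrix.of fun a b => ∑' k : ℕ, (A ^ (k + 1)) a b

/-- Weak irreducibility of a nonnegative matrix with respect to a partition of `𝒳`
into recurrent states `Xr` and transient states `Xt`. -/
structure WeaklyIrred (A : Matrix 𝒳 𝒳 ℝ≥0∞) (Xr Xt : Finset 𝒳) : Prop where
  compl : ∀ a, a ∈ Xr ↔ a ∉ Xt
  npty : Xr.Nonempty
  rec_pos : ∀ a b, b ∈ Xr → 0 < matStar A a b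
  trans_zero : ∀ a b, b ∈ Xt → a = b ∨ a ∈ Xr → matStar A a b = 0

/-- The real expected offspring matrix. -/
noncomputable def meanMatR (𝒬 : 𝒳 → List 𝒳 → ℝ) : Matrix 𝒳 𝒳 ℝ :=
  Matrix.of fun a b => ∑' c : List 𝒳, 𝒬 b c * (mult a c : ℝ)

/-- Criticality: the Perron-Frobenius eigenvalue of the expected offspring matrix is
`1`; equivalently (for weakly irreducible matrices) there is a strictly positive right
eigenvector with eigenvalue `1`. -/
def CriticalKernel (𝒬 : 𝒳 → List 𝒳 → ℝ) : Prop :=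
  ∃ u : 𝒳 → ℝ, (∀ a, 0 < u a) ∧ ∀ a, ∑ b, meanMatR 𝒬 a b * u b = u a

/-- The uniform bound on the number of transient offspring. -/
def BoundedTransient (𝒬 : 𝒳 → List 𝒳 → ℝ) (Xt : Finset 𝒳) : Prop :=
  ∃ B : ℕ, ∀ b c, 𝒬 b c ≠ 0 → c.countP (fun a => decide (a ∈ Xt)) ≤ B

end Multitype
section Variational

variable {𝒳 : Type*} [Fintype 𝒳] [DecidableEq 𝒳]

/-- `U_g(a) = log ∑_c 𝒬{c|a} e^{g(a,c)}`. -/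
noncomputable def Ug (𝒬 : 𝒳 → List 𝒳 → ℝ) (g : 𝒳 × List 𝒳 → ℝ) (a : 𝒳) : ℝ :=
  Real.log (∑' c : List 𝒳, 𝒬 a c * Real.exp (g (a, c)))

/-- The variational functional
`Ĵ(ν) = sup_{g bounded} ∫ [g(b,c) − ∑_{j=1}^n U_g(a_j)] ν(db,dc)`,
where `c = (n, a₁, …, a_n)`. -/
noncomputable def offRateVar (𝒬 : 𝒳 → List 𝒳 → ℝ) (ν : 𝒳 × List 𝒳 → ℝ) : EReal :=
  ⨆ g : {g : 𝒳 × List 𝒳 → ℝ // ∃ M : ℝ, ∀ x, |g x| ≤ M},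
    ((∑' x : 𝒳 × List 𝒳, ν x * (g.1 x - (x.2.map (Ug 𝒬 g.1)).sum) : ℝ) : EReal)

end Variational

/-!
`J` coincides with `Ĵ` on `ℳ(𝒳 × 𝒳*)`, and `Ĵ` is a supremum of the functionals
`ν ↦ ∫ [g(b,c) - ∑ⱼ U_g(aⱼ)] dν`, which are affine and, being combinations of the test integrals
that define the topology, continuous; hence `J` is convex and lower semicontinuous.

Both `J` and `Ĵ` are infinite off the shift-invariant measures. On them, shift-invariance turns
the functional into `∫ g dν - ∫ U_g dν₁`. Since `log x ≤ x - 1`, this dominates the linearised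
dual `∫ g dν - ∫ (e^g - 1) d(ν₁ ⊗ 𝒬)`, and it equals that dual evaluated at the fibrewise
normalisation `g - U_g`. Pointwise Fenchel duality for `s log (s/t) + t - s` shows that the
supremum of the linearised dual over bounded `g` is `H(ν ‖ ν₁ ⊗ 𝒬)`.
-/

open Real

section EntropyDuality

variable {α : Type*}

lemma summable_mul_of_abs_le {ν w : α → ℝ} {M : ℝ} (hν : Summable ν) (hw : ∀ x, |w x| ≤ M) :
    Summable fun x => ν x * w x :=
  Summable.of_norm_bounded (hν.abs.mul_right M) fun x => by
    rw [Real.norm_eq_abs, abs_mul]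
    exact mul_le_mul_of_nonneg_left (hw x) (abs_nonneg _)

lemma Finset.exists_lt_sum_of_forall_lt {β : Type*} [Nonempty β] {F : Finset α} {f : α → ℝ}
    {φ : α → β → ℝ} (h : ∀ x ∈ F, ∀ r < f x, ∃ b, r < φ x b) {r : ℝ}
    (hr : r < ∑ x ∈ F, f x) : ∃ b : α → β, r < ∑ x ∈ F, φ x (b x) := by
  set ε := (∑ x ∈ F, f x - r) / (F.card + 1)
  have hε : (F.card + 1) * ε = ∑ x ∈ F, f x - r := mul_div_cancel₀ _ (by positivity)
  have hε0 : 0 < ε := div_pos (by linarith) (by positivity)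
  choose! b hb using fun x hx => h x hx (f x - ε) (by linarith)
  refine ⟨b, ?_⟩
  calc r < ∑ x ∈ F, f x - F.card * ε := by linarith
    _ = ∑ x ∈ F, (f x - ε) := by rw [Finset.sum_sub_distrib, Finset.sum_const, nsmul_eq_mul]
    _ ≤ ∑ x ∈ F, φ x (b x) := Finset.sum_le_sum fun x hx => (hb x hx).le

/-- Fenchel–Young inequality for the summand of `relEnt`. -/
lemma mul_sub_mul_exp_sub_one_le {s t : ℝ} (hs : 0 ≤ s) (ht : 0 ≤ t) (hst : t = 0 → s = 0)
    (g : ℝ) : s * g - t * (exp g - 1) ≤ s * log (s / t) + t - s := by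
  rcases hs.eq_or_lt with rfl | hs
  · nlinarith [exp_pos g]
  have ht : 0 < t := ht.lt_of_ne fun h => hs.ne' (hst h.symm)
  have key := add_one_le_exp (g - log (s / t))
  rw [exp_sub, exp_log (div_pos hs ht), div_div_eq_mul_div, le_div_iff₀ hs] at key
  nlinarith

lemma mul_log_div_add_sub_nonneg {s t : ℝ} (hs : 0 ≤ s) (ht : 0 ≤ t) (hst : t = 0 → s = 0) :
    0 ≤ s * log (s / t) + t - s := by
  simpa using mul_sub_mul_exp_sub_one_le hs ht hst 0

lemma exists_lt_mul_sub_mul_exp_sub_one {s t r : ℝ} (hs : 0 ≤ s) (ht : 0 ≤ t)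
    (hst : t = 0 → s = 0) (hr : r < s * log (s / t) + t - s) :
    ∃ g, r < s * g - t * (exp g - 1) := by
  rcases hs.eq_or_lt with rfl | hs
  · rcases ht.eq_or_lt with rfl | ht
    · exact ⟨0, by simpa using hr⟩
    -- `g → -∞` approaches the value `t`
    have hrt : r < t := by simpa using hr
    refine ⟨log ((t - r) / (2 * t)), ?_⟩
    have hexp : t * ((t - r) / (2 * t)) = (t - r) / 2 := by field_simp
    rw [exp_log (div_pos (by linarith) (by linarith)), mul_sub, hexp]
    linarith
  have ht : 0 < t := ht.lt_of_ne fun h => hs.ne' (hst h.symm)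
  refine ⟨log (s / t), ?_⟩
  rw [exp_log (div_pos hs ht), mul_sub, mul_div_cancel₀ _ ht.ne']
  linarith

/-- The linearised Donsker–Varadhan functional `∫ g dν - ∫ (e^g - 1) dρ`; its supremum over
bounded `g` is `H(ν ‖ ρ)`. -/
noncomputable def entDual (ν ρ g : α → ℝ) : ℝ :=
  ∑' x, (ν x * g x - ρ x * (exp (g x) - 1))

variable {ν ρ : α → ℝ}

lemma abs_exp_sub_one_le {y M : ℝ} (hy : |y| ≤ M) : |exp y - 1| ≤ exp M + 1 := by
  have := exp_le_exp.2 (abs_le.1 hy).2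
  exact abs_le.2 ⟨by linarith [exp_pos y], by linarith⟩

lemma summable_entDual (hν : Summable ν) (hρ : Summable ρ) {g : α → ℝ} {M : ℝ}
    (hg : ∀ x, |g x| ≤ M) : Summable fun x => ν x * g x - ρ x * (exp (g x) - 1) :=
  (summable_mul_of_abs_le hν hg).sub
    (summable_mul_of_abs_le hρ fun x => abs_exp_sub_one_le (hg x))

lemma entDual_ite_mem [DecidableEq α] (F : Finset α) (g : α → ℝ) :
    entDual ν ρ (fun x => if x ∈ F then g x else 0)
      = ∑ x ∈ F, (ν x * g x - ρ x * (exp (g x) - 1)) := by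
  rw [entDual, tsum_eq_sum (s := F) fun x hx => by simp [hx]]
  exact Finset.sum_congr rfl fun x hx => by simp [hx]

lemma entDual_le_relEnt (hν0 : ∀ x, 0 ≤ ν x) (hρ0 : ∀ x, 0 ≤ ρ x) (hν : Summable ν)
    (hρ : Summable ρ) {g : α → ℝ} {M : ℝ} (hg : ∀ x, |g x| ≤ M) :
    (entDual ν ρ g : EReal) ≤ relEnt ν ρ := by
  rw [relEnt]
  split_ifs with hac
  swap
  · simp
  have hf0 x := mul_log_div_add_sub_nonneg (hν0 x) (hρ0 x) (hac x)
  by_cases htop : ∑' x, ENNReal.ofReal (ν x * log (ν x / ρ x) + ρ x - ν x) = ⊤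
  · simp [htop]
  have hf : Summable fun x => ν x * log (ν x / ρ x) + ρ x - ν x := by
    simpa [ENNReal.toReal_ofReal (hf0 _)] using ENNReal.summable_toReal htop
  rw [← ENNReal.ofReal_tsum_of_nonneg hf0 hf, EReal.coe_ennreal_ofReal,
    max_eq_left (tsum_nonneg hf0), EReal.coe_le_coe_iff]
  exact (summable_entDual hν hρ hg).tsum_le_tsum
    (fun x => mul_sub_mul_exp_sub_one_le (hν0 x) (hρ0 x) (hac x) (g x)) hf

lemma exists_lt_entDual (hν0 : ∀ x, 0 ≤ ν x) (hρ0 : ∀ x, 0 ≤ ρ x) {r : ℝ}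
    (hr : (r : EReal) < relEnt ν ρ) : ∃ g : α → ℝ, (∃ M, ∀ x, |g x| ≤ M) ∧ r < entDual ν ρ g := by
  classical
  rcases lt_or_ge r 0 with hr0 | hr0
  · exact ⟨0, ⟨0, by simp⟩, by simpa [entDual] using hr0⟩
  have hr_coe : ((ENNReal.ofReal r : ℝ≥0∞) : EReal) = r := by
    rw [EReal.coe_ennreal_ofReal, max_eq_left hr0]
  rw [← hr_coe, EReal.coe_ennreal_lt_coe_ennreal_iff, relEnt] at hr
  split_ifs at hr with hac
  · have hf0 x := mul_log_div_add_sub_nonneg (hν0 x) (hρ0 x) (hac x)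
    obtain ⟨F, hF⟩ := lt_iSup_iff.1 (ENNReal.tsum_eq_iSup_sum ▸ hr)
    rw [← ENNReal.ofReal_sum_of_nonneg fun x _ => hf0 x, ENNReal.ofReal_lt_ofReal_iff'] at hF
    obtain ⟨g, hg⟩ := Finset.exists_lt_sum_of_forall_lt
      (fun x _ _ => exists_lt_mul_sub_mul_exp_sub_one (hν0 x) (hρ0 x) (hac x)) hF.1
    refine ⟨fun x => if x ∈ F then g x else 0, ⟨∑ x ∈ F, |g x|, fun x => ?_⟩, ?_⟩
    · dsimp only
      split_ifs with hx
      · exact Finset.single_le_sum (f := fun x => |g x|) (fun _ _ => abs_nonneg _) hx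
      · simpa using Finset.sum_nonneg fun x _ => abs_nonneg (g x)
    · rwa [entDual_ite_mem]
  · -- a point charged by `ν` but not by `ρ` makes the functional unbounded
    push Not at hac
    obtain ⟨x₀, hρx, hνx⟩ := hac
    refine ⟨fun x => if x ∈ ({x₀} : Finset α) then (r + 1) / ν x₀ else 0,
      ⟨|(r + 1) / ν x₀|, fun x => by dsimp only; split_ifs <;> simp⟩, ?_⟩
    rw [entDual_ite_mem, Finset.sum_singleton, hρx, mul_div_cancel₀ _ hνx]
    linarith

end EntropyDuality

lemma tsum_prod_fintype {ι β : Type*} [Fintype ι] {f : ι × β → ℝ} (hf : Summable f) :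
    ∑' x, f x = ∑ a, ∑' c, f (a, c) := by
  rw [hf.tsum_prod' hf.prod_factor, tsum_fintype]

section Offspring

variable {𝒳 : Type*}

lemma list_sum_map_eq_sum_mult [Fintype 𝒳] [DecidableEq 𝒳] (u : 𝒳 → ℝ) (l : List 𝒳) :
    (l.map u).sum = ∑ a, (mult a l : ℝ) * u a := by
  rw [Finset.sum_list_map_count, Finset.sum_subset (Finset.subset_univ _) fun a _ ha => by
    simp [List.count_eq_zero_of_not_mem (by simpa using ha)]]
  simp [mult, nsmul_eq_mul]

namespace IsOffMeasure

variable {ν : 𝒳 × List 𝒳 → ℝ} (hν : IsOffMeasure ν)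
include hν

lemma summable : Summable ν := hν.hasSum.summable

lemma marg1_nonneg (a : 𝒳) : 0 ≤ marg1 ν a := tsum_nonneg fun _ => hν.nonneg _

lemma summable_mult_mul [DecidableEq 𝒳] (a : 𝒳) :
    Summable fun x : 𝒳 × List 𝒳 => (mult a x.2 : ℝ) * ν x :=
  hν.moment.of_nonneg_of_le (fun x => mul_nonneg (Nat.cast_nonneg _) (hν.nonneg x)) fun x =>
    mul_le_mul_of_nonneg_right (by exact_mod_cast List.count_le_length) (hν.nonneg x)

lemma tsum_mul_fst [Fintype 𝒳] (u : 𝒳 → ℝ) : ∑' x, ν x * u x.1 = ∑ a, marg1 ν a * u a := by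
  rw [tsum_prod_fintype (summable_mul_of_abs_le hν.summable (M := ∑ a, |u a|) fun x =>
    Finset.single_le_sum (f := fun a => |u a|) (fun _ _ => abs_nonneg _) (Finset.mem_univ x.1))]
  simp only [marg1, tsum_mul_right]

end IsOffMeasure

/-- The reference measure `ν₁ ⊗ 𝒬`. -/
noncomputable def margKer (𝒬 : 𝒳 → List 𝒳 → ℝ) (ν : 𝒳 × List 𝒳 → ℝ) (x : 𝒳 × List 𝒳) : ℝ :=
  marg1 ν x.1 * 𝒬 x.1 x.2

noncomputable def offVar (𝒬 : 𝒳 → List 𝒳 → ℝ) (g ν : 𝒳 × List 𝒳 → ℝ) : ℝ :=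
  ∑' x, ν x * (g x - (x.2.map (Ug 𝒬 g)).sum)

lemma le_offRateVar (𝒬 : 𝒳 → List 𝒳 → ℝ) (ν : 𝒳 × List 𝒳 → ℝ) {g : 𝒳 × List 𝒳 → ℝ} {M : ℝ}
    (hg : ∀ x, |g x| ≤ M) : (offVar 𝒬 g ν : EReal) ≤ offRateVar 𝒬 ν :=
  le_iSup (fun g : {g : 𝒳 × List 𝒳 → ℝ // ∃ M : ℝ, ∀ x, |g x| ≤ M} => (offVar 𝒬 g.1 ν : EReal))
    ⟨g, M, hg⟩

section OffVar

variable [Fintype 𝒳] [DecidableEq 𝒳] (𝒬 : 𝒳 → List 𝒳 → ℝ) {ν : 𝒳 × List 𝒳 → ℝ}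
  (hν : IsOffMeasure ν) {g : 𝒳 × List 𝒳 → ℝ} {M : ℝ} (hg : ∀ x, |g x| ≤ M)
include hν hg

lemma summable_offVar :
    Summable fun x : 𝒳 × List 𝒳 => ν x * (g x - (x.2.map (Ug 𝒬 g)).sum) := by
  refine ((summable_mul_of_abs_le hν.summable hg).sub (summable_sum (s := Finset.univ) fun a _ =>
    (hν.summable_mult_mul a).mul_left (Ug 𝒬 g a))).congr fun x => ?_
  rw [list_sum_map_eq_sum_mult, mul_sub, Finset.mul_sum]
  simp only [mul_comm, mul_left_comm]

lemma offVar_eq : offVar 𝒬 g ν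
    = ∑' x, ν x * g x - ∑ a, Ug 𝒬 g a * ∑' x : 𝒳 × List 𝒳, (mult a x.2 : ℝ) * ν x := by
  have hsum a := (hν.summable_mult_mul a).mul_left (Ug 𝒬 g a)
  simp_rw [← tsum_mul_left]
  rw [← Summable.tsum_finsetSum fun a _ => hsum a,
    ← (summable_mul_of_abs_le hν.summable hg).tsum_sub (summable_sum fun a _ => hsum a), offVar]
  refine tsum_congr fun x => ?_
  rw [list_sum_map_eq_sum_mult, mul_sub, Finset.mul_sum]
  simp only [mul_comm, mul_left_comm]

lemma offVar_eq_of_shiftInv (hs : ShiftInv ν) :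
    offVar 𝒬 g ν = ∑' x, ν x * g x - ∑ a, marg1 ν a * Ug 𝒬 g a := by
  rw [offVar_eq 𝒬 hν hg]
  exact congrArg _ (Finset.sum_congr rfl fun a _ => by rw [hs a, mul_comm])

lemma offVar_convexComb {ν' : 𝒳 × List 𝒳 → ℝ} (hν' : IsOffMeasure ν')
    (θ : ℝ) : offVar 𝒬 g (fun x => θ * ν x + (1 - θ) * ν' x)
      = θ * offVar 𝒬 g ν + (1 - θ) * offVar 𝒬 g ν' := by
  rw [offVar, offVar, offVar, ← tsum_mul_left, ← tsum_mul_left,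
    ← ((summable_offVar 𝒬 hν hg).mul_left θ).tsum_add ((summable_offVar 𝒬 hν' hg).mul_left _)]
  exact tsum_congr fun x => by ring

end OffVar

end Offspring

section Kernel

variable {𝒳 : Type*} {𝒬 : 𝒳 → List 𝒳 → ℝ} (h𝒬_nonneg : ∀ a c, 0 ≤ 𝒬 a c)
  (h𝒬_sum : ∀ a, HasSum (𝒬 a) 1)

section Bounded

variable {g : 𝒳 × List 𝒳 → ℝ} {M : ℝ} (hg : ∀ x, |g x| ≤ M)
include h𝒬_nonneg h𝒬_sum hg

omit h𝒬_nonneg in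
lemma summable_mul_exp (a : 𝒳) : Summable fun c => 𝒬 a c * exp (g (a, c)) :=
  summable_mul_of_abs_le (h𝒬_sum a).summable (M := exp M) fun c => by
    rw [abs_exp]; exact exp_le_exp.2 (abs_le.1 (hg (a, c))).2

lemma tsum_mul_exp_mem_Icc (a : 𝒳) :
    ∑' c, 𝒬 a c * exp (g (a, c)) ∈ Set.Icc (exp (-M)) (exp M) := by
  have hsum := summable_mul_exp h𝒬_sum hg a
  have hconst (y : ℝ) : ∑' c, 𝒬 a c * exp y = exp y := by
    rw [tsum_mul_right, (h𝒬_sum a).tsum_eq, one_mul]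
  constructor
  · calc exp (-M) = ∑' c, 𝒬 a c * exp (-M) := (hconst _).symm
      _ ≤ _ := ((h𝒬_sum a).summable.mul_right _).tsum_le_tsum (fun c => mul_le_mul_of_nonneg_left
          (exp_le_exp.2 (neg_le_of_abs_le (hg (a, c)))) (h𝒬_nonneg a c)) hsum
  · calc _ ≤ ∑' c, 𝒬 a c * exp M := hsum.tsum_le_tsum (fun c => mul_le_mul_of_nonneg_left
          (exp_le_exp.2 (abs_le.1 (hg (a, c))).2) (h𝒬_nonneg a c)) ((h𝒬_sum a).summable.mul_right _)
      _ = exp M := hconst _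

lemma exp_Ug (a : 𝒳) : exp (Ug 𝒬 g a) = ∑' c, 𝒬 a c * exp (g (a, c)) :=
  exp_log ((exp_pos _).trans_le (tsum_mul_exp_mem_Icc h𝒬_nonneg h𝒬_sum hg a).1)

lemma abs_Ug_le (a : 𝒳) : |Ug 𝒬 g a| ≤ M := by
  have h := tsum_mul_exp_mem_Icc h𝒬_nonneg h𝒬_sum hg a
  rw [← exp_Ug h𝒬_nonneg h𝒬_sum hg, Set.mem_Icc, exp_le_exp, exp_le_exp] at h
  exact abs_le.2 h

lemma tsum_mul_exp_sub_Ug (a : 𝒳) : ∑' c, 𝒬 a c * exp (g (a, c) - Ug 𝒬 g a) = 1 := by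
  simp_rw [exp_sub, ← mul_div_assoc, tsum_div_const, exp_Ug h𝒬_nonneg h𝒬_sum hg]
  exact div_self ((exp_pos _).trans_le (tsum_mul_exp_mem_Icc h𝒬_nonneg h𝒬_sum hg a).1).ne'

lemma abs_sub_Ug_fst_le (x : 𝒳 × List 𝒳) : |g x - Ug 𝒬 g x.1| ≤ M + M :=
  (abs_sub _ _).trans (add_le_add (hg x) (abs_Ug_le h𝒬_nonneg h𝒬_sum hg x.1))

end Bounded

include h𝒬_sum in
lemma Ug_of_fst {g : 𝒳 × List 𝒳 → ℝ} {u : 𝒳 → ℝ} (hg : ∀ x, g x = u x.1) (a : 𝒳) :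
    Ug 𝒬 g a = u a := by
  simp_rw [Ug, hg, tsum_mul_right, (h𝒬_sum a).tsum_eq, one_mul, log_exp]

variable {ν : 𝒳 × List 𝒳 → ℝ} (hν : IsOffMeasure ν)

section ShiftDefect

variable [Fintype 𝒳] [DecidableEq 𝒳]
include h𝒬_sum hν

lemma offVar_ite_fst (a : 𝒳) (t : ℝ) : offVar 𝒬 (fun x => if x.1 = a then t else 0) ν
    = t * (marg1 ν a - ∑' x : 𝒳 × List 𝒳, (mult a x.2 : ℝ) * ν x) := by
  have hU := Ug_of_fst h𝒬_sum (g := fun x => if x.1 = a then t else 0)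
    (u := fun b => if b = a then t else 0) fun _ => rfl
  rw [offVar_eq 𝒬 hν (M := |t|) fun x => by split_ifs <;> simp,
    hν.tsum_mul_fst fun b => if b = a then t else 0]
  simp only [mul_ite, mul_zero, Finset.sum_ite_eq', Finset.mem_univ, ↓reduceIte, hU, ite_mul,
    zero_mul]
  ring

/-- Without shift-invariance, bounded functions of the parent type alone make `Ĵ` infinite. -/
lemma offRateVar_eq_top_of_not_shiftInv (hs : ¬ ShiftInv ν) : offRateVar 𝒬 ν = ⊤ := by
  obtain ⟨a, ha⟩ := not_forall.1 hs
  set d := marg1 ν a - ∑' x : 𝒳 × List 𝒳, (mult a x.2 : ℝ) * ν x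
  have hd : d ≠ 0 := sub_ne_zero.2 ha
  refine eq_top_iff.2 (EReal.ge_of_forall_gt_iff_ge.1 fun r _ => ?_)
  have hg (x : 𝒳 × List 𝒳) : |if x.1 = a then r / d else 0| ≤ |r / d| := by
    split_ifs <;> simp
  calc (r : EReal) = offVar 𝒬 (fun x => if x.1 = a then r / d else 0) ν := by
        rw [offVar_ite_fst h𝒬_sum hν, div_mul_cancel₀ _ hd]
    _ ≤ offRateVar 𝒬 ν := le_offRateVar 𝒬 ν hg

end ShiftDefect

include h𝒬_nonneg hν

lemma margKer_nonneg (x : 𝒳 × List 𝒳) : 0 ≤ margKer 𝒬 ν x :=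
  mul_nonneg (hν.marg1_nonneg _) (h𝒬_nonneg _ _)

include h𝒬_sum

lemma summable_margKer [Finite 𝒳] : Summable (margKer 𝒬 ν) := by
  refine (summable_prod_of_nonneg (margKer_nonneg h𝒬_nonneg hν)).2
    ⟨fun a => ?_, Summable.of_finite⟩
  exact (h𝒬_sum a).summable.mul_left (marg1 ν a)

variable [Fintype 𝒳]

lemma entDual_margKer_eq {g : 𝒳 × List 𝒳 → ℝ} {M : ℝ} (hg : ∀ x, |g x| ≤ M) :
    entDual ν (margKer 𝒬 ν) g
      = ∑' x, ν x * g x - ∑ a, marg1 ν a * (∑' c, 𝒬 a c * exp (g (a, c)) - 1) := by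
  have hexp x := abs_exp_sub_one_le (hg x)
  rw [entDual, (summable_mul_of_abs_le hν.summable hg).tsum_sub (summable_mul_of_abs_le
    (summable_margKer h𝒬_nonneg h𝒬_sum hν) hexp), tsum_prod_fintype (summable_mul_of_abs_le
    (summable_margKer h𝒬_nonneg h𝒬_sum hν) hexp)]
  refine congrArg _ (Finset.sum_congr rfl fun a _ => ?_)
  simp_rw [margKer, mul_assoc, tsum_mul_left, mul_sub, mul_one]
  rw [(summable_mul_exp h𝒬_sum hg a).tsum_sub (h𝒬_sum a).summable, (h𝒬_sum a).tsum_eq]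
  ring

variable [DecidableEq 𝒳] (hs : ShiftInv ν) {g : 𝒳 × List 𝒳 → ℝ} {M : ℝ} (hg : ∀ x, |g x| ≤ M)
include hs hg

lemma entDual_le_offVar : entDual ν (margKer 𝒬 ν) g ≤ offVar 𝒬 g ν := by
  rw [entDual_margKer_eq h𝒬_nonneg h𝒬_sum hν hg, offVar_eq_of_shiftInv 𝒬 hν hg hs]
  gcongr with a
  · exact hν.marg1_nonneg a
  · rw [← exp_Ug h𝒬_nonneg h𝒬_sum hg]
    linarith [add_one_le_exp (Ug 𝒬 g a)]

lemma offVar_eq_entDual :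
    offVar 𝒬 g ν = entDual ν (margKer 𝒬 ν) (fun x => g x - Ug 𝒬 g x.1) := by
  rw [entDual_margKer_eq h𝒬_nonneg h𝒬_sum hν (abs_sub_Ug_fst_le h𝒬_nonneg h𝒬_sum hg),
    offVar_eq_of_shiftInv 𝒬 hν hg hs]
  simp only [tsum_mul_exp_sub_Ug h𝒬_nonneg h𝒬_sum hg, sub_self, mul_zero, Finset.sum_const_zero,
    sub_zero, mul_sub]
  rw [(summable_mul_of_abs_le hν.summable hg).tsum_sub (summable_mul_of_abs_le hν.summable
    fun x => abs_Ug_le h𝒬_nonneg h𝒬_sum hg x.1), hν.tsum_mul_fst]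

end Kernel

section Duality

variable {𝒳 : Type*} [Fintype 𝒳] [DecidableEq 𝒳] {𝒬 : 𝒳 → List 𝒳 → ℝ}
  (h𝒬_nonneg : ∀ a c, 0 ≤ 𝒬 a c) (h𝒬_sum : ∀ a, HasSum (𝒬 a) 1)
include h𝒬_nonneg h𝒬_sum

theorem offRate_eq_offRateVar {ν : 𝒳 × List 𝒳 → ℝ} (hν : IsOffMeasure ν) :
    (offRate 𝒬 ν : EReal) = offRateVar 𝒬 ν := by
  by_cases hs : ShiftInv ν
  swap
  · rw [offRate, if_neg hs, offRateVar_eq_top_of_not_shiftInv h𝒬_sum hν hs]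
    exact EReal.coe_ennreal_top
  have hρ0 := margKer_nonneg h𝒬_nonneg hν
  have hρ := summable_margKer h𝒬_nonneg h𝒬_sum hν
  rw [offRate, if_pos hs]
  apply le_antisymm
  · refine EReal.ge_of_forall_gt_iff_ge.1 fun r hr => ?_
    obtain ⟨g, ⟨M, hg⟩, hrg⟩ := exists_lt_entDual hν.nonneg hρ0 hr
    calc (r : EReal) ≤ offVar 𝒬 g ν := EReal.coe_le_coe_iff.2
          (hrg.le.trans (entDual_le_offVar h𝒬_nonneg h𝒬_sum hν hs hg))
      _ ≤ offRateVar 𝒬 ν := le_offRateVar 𝒬 ν hg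
  · refine iSup_le fun g => ?_
    obtain ⟨M, hg⟩ := g.2
    change (offVar 𝒬 g.1 ν : EReal) ≤ _
    rw [offVar_eq_entDual h𝒬_nonneg h𝒬_sum hν hs hg]
    exact entDual_le_relEnt hν.nonneg hρ0 hν.summable hρ
      (abs_sub_Ug_fst_le h𝒬_nonneg h𝒬_sum hg)

end Duality

lemma coe_convexComb_le {x y θ : ℝ} {A B : ℝ≥0∞} (h0 : 0 ≤ θ) (h1 : θ ≤ 1)
    (hx : (x : EReal) ≤ A) (hy : (y : EReal) ≤ B) :
    ((θ * x + (1 - θ) * y : ℝ) : EReal)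
      ≤ ((ENNReal.ofReal θ * A + ENNReal.ofReal (1 - θ) * B : ℝ≥0∞) : EReal) := by
  rw [EReal.coe_ennreal_add, EReal.coe_ennreal_mul, EReal.coe_ennreal_mul,
    EReal.coe_ennreal_ofReal, EReal.coe_ennreal_ofReal, max_eq_left h0,
    max_eq_left (sub_nonneg.2 h1), EReal.coe_add, EReal.coe_mul, EReal.coe_mul]
  exact add_le_add (mul_le_mul_of_nonneg_left hx (EReal.coe_nonneg.2 h0))
    (mul_le_mul_of_nonneg_left hy (EReal.coe_nonneg.2 (sub_nonneg.2 h1)))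

lemma LowerSemicontinuous.of_coe_ereal {α : Type*} [TopologicalSpace α] {f : α → ℝ≥0∞}
    (h : LowerSemicontinuous fun x => (f x : EReal)) : LowerSemicontinuous f := fun x y hy =>
  (h x y (EReal.coe_ennreal_lt_coe_ennreal_iff.2 hy)).mono fun _ =>
    EReal.coe_ennreal_lt_coe_ennreal_iff.1

section Topology

variable {𝒳 : Type*} [Fintype 𝒳] [DecidableEq 𝒳]

lemma continuous_tsum_mul_test {f : 𝒳 × List 𝒳 → ℝ} (hf : f ∈ offTests 𝒳) :
    Continuous fun ν : MSpace 𝒳 => ∑' x, ν.1 x * f x := by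
  have h : Continuous fun ν : MSpace 𝒳 => fun f : offTests 𝒳 => ∑' x, ν.1 x * f.1 x :=
    continuous_induced_dom
  exact (continuous_apply ⟨f, hf⟩).comp h

lemma tsum_mult_mul_eq_sum {ν : 𝒳 × List 𝒳 → ℝ} (hν : IsOffMeasure ν) (a : 𝒳) :
    ∑' x : 𝒳 × List 𝒳, (mult a x.2 : ℝ) * ν x
      = ∑ b, ∑' x : 𝒳 × List 𝒳, ν x * ((mult a x.2 : ℝ) * if x.1 = b then 1 else 0) := by
  rw [← Summable.tsum_finsetSum fun b _ =>
    (summable_mul_of_abs_le (hν.summable_mult_mul a) (M := 1) fun x =>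
      (by split_ifs <;> simp : |if x.1 = b then (1 : ℝ) else 0| ≤ 1)).congr fun x => by ring]
  exact tsum_congr fun x => by simp [mul_comm]

lemma continuous_tsum_mult_mul (a : 𝒳) :
    Continuous fun ν : MSpace 𝒳 => ∑' x : 𝒳 × List 𝒳, (mult a x.2 : ℝ) * ν.1 x := by
  simp_rw [fun ν : MSpace 𝒳 => tsum_mult_mul_eq_sum ν.2 a]
  exact continuous_finsetSum _ fun b _ => continuous_tsum_mul_test (Or.inr ⟨a, b, rfl⟩)

lemma continuous_offVar (𝒬 : 𝒳 → List 𝒳 → ℝ) {g : 𝒳 × List 𝒳 → ℝ} {M : ℝ}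
    (hg : ∀ x, |g x| ≤ M) : Continuous fun ν : MSpace 𝒳 => offVar 𝒬 g ν.1 := by
  simp_rw [fun ν : MSpace 𝒳 => offVar_eq 𝒬 ν.2 hg]
  exact (continuous_tsum_mul_test (Or.inl ⟨M, hg⟩)).sub
    (continuous_finsetSum _ fun a _ => continuous_const.mul (continuous_tsum_mult_mul a))

variable {𝒬 : 𝒳 → List 𝒳 → ℝ} (h𝒬_nonneg : ∀ a c, 0 ≤ 𝒬 a c) (h𝒬_sum : ∀ a, HasSum (𝒬 a) 1)
include h𝒬_nonneg h𝒬_sum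

lemma lowerSemicontinuous_offRate : LowerSemicontinuous fun ν : MSpace 𝒳 => offRate 𝒬 ν.1 := by
  refine LowerSemicontinuous.of_coe_ereal ?_
  have h : (fun ν : MSpace 𝒳 => (offRate 𝒬 ν.1 : EReal))
      = fun ν => ⨆ g : {g : 𝒳 × List 𝒳 → ℝ // ∃ M, ∀ x, |g x| ≤ M}, (offVar 𝒬 g.1 ν.1 : EReal) :=
    funext fun ν => offRate_eq_offRateVar h𝒬_nonneg h𝒬_sum ν.2
  rw [h]
  exact lowerSemicontinuous_iSup fun g =>
    (continuous_coe_real_ereal.comp (continuous_offVar 𝒬 g.2.choose_spec)).lowerSemicontinuous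

lemma offRate_convexComb_le {ν ν' : 𝒳 × List 𝒳 → ℝ} (hν : IsOffMeasure ν)
    (hν' : IsOffMeasure ν') {θ : ℝ} (h0 : 0 ≤ θ) (h1 : θ ≤ 1)
    (h : IsOffMeasure fun x => θ * ν x + (1 - θ) * ν' x) :
    offRate 𝒬 (fun x => θ * ν x + (1 - θ) * ν' x)
      ≤ ENNReal.ofReal θ * offRate 𝒬 ν + ENNReal.ofReal (1 - θ) * offRate 𝒬 ν' := by
  rw [← EReal.coe_ennreal_le_coe_ennreal_iff, offRate_eq_offRateVar h𝒬_nonneg h𝒬_sum h]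
  refine iSup_le fun g => ?_
  obtain ⟨M, hg⟩ := g.2
  change (offVar 𝒬 g.1 _ : EReal) ≤ _
  rw [offVar_convexComb 𝒬 hν hg hν']
  exact coe_convexComb_le h0 h1
    ((le_offRateVar 𝒬 ν hg).trans (offRate_eq_offRateVar h𝒬_nonneg h𝒬_sum hν).ge)
    ((le_offRateVar 𝒬 ν' hg).trans (offRate_eq_offRateVar h𝒬_nonneg h𝒬_sum hν').ge)

end Topology

section Statement11

variable {𝒳 : Type*} [Fintype 𝒳] [DecidableEq 𝒳]

theorem offspring_rate_convex_lsc_le_variational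
    (𝒬 : 𝒳 → List 𝒳 → ℝ) (h𝒬_nonneg : ∀ a c, 0 ≤ 𝒬 a c) (h𝒬_sum : ∀ a, HasSum (𝒬 a) 1)
    (J : MSpace 𝒳 → ℝ≥0∞) (hJ : ∀ ν, J ν = offRate 𝒬 ν.1) :
    -- `J` is convex
    (∀ (ν ν' : MSpace 𝒳) (θ : ℝ), 0 ≤ θ → θ ≤ 1 →
      ∀ h : IsOffMeasure (fun x => θ * ν.1 x + (1 - θ) * ν'.1 x),
        J ⟨fun x => θ * ν.1 x + (1 - θ) * ν'.1 x, h⟩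
          ≤ ENNReal.ofReal θ * J ν + ENNReal.ofReal (1 - θ) * J ν') ∧
    -- `J` is lower semicontinuous
    LowerSemicontinuous J ∧
    -- `J ≤ Ĵ`
    (∀ ν : MSpace 𝒳, (J ν : EReal) ≤ offRateVar 𝒬 ν.1) := by
  obtain rfl : J = fun ν => offRate 𝒬 ν.1 := funext hJ
  exact ⟨fun ν ν' _ h0 h1 h => offRate_convexComb_le h𝒬_nonneg h𝒬_sum ν.2 ν'.2 h0 h1 h,
    lowerSemicontinuous_offRate h𝒬_nonneg h𝒬_sum,
    fun ν => (offRate_eq_offRateVar h𝒬_nonneg h𝒬_sum ν.2).le⟩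

end Statement11
end
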